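/- arXiv:math/0409514 — 4 statements merged into one kernel-verified Lean document; each statement's English description precedes it below -/
import Mathlib

section
/- Let ⋆ be a semistar operation on an integral domain D and I a nonzero fractional ideal. Then I is ⋆_f-invertible if and only if I and I^{-1} are both ⋆_f-finite and I is ⋆-invertible. -/
open Submodule

structure SemistarOperation (R K : Type*) [CommRing R] [Field K] [Algebra R K] where
  star : Submodule R K → Submodule R K
  star_smul : ∀ (x : K), x ≠ 0 → ∀ E : Submodule R K, E ≠ ⊥ →
    star (E.map (LinearMap.mul R K x)) = (star E).map (LinearMap.mul R K x)
  star_mono : ∀ E F : Submodule R K, E ≠ ⊥ → F ≠ ⊥ → E ≤ F → star E ≤ star F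
  le_star : ∀ E : Submodule R K, E ≠ ⊥ → E ≤ star E
  star_idem : ∀ E : Submodule R K, E ≠ ⊥ → star (star E) = star E

variable {R K : Type*} [CommRing R] [Field K] [Algebra R K]

def starF (s : SemistarOperation R K) (E : Submodule R K) : Submodule R K :=
  ⨆ (F : Submodule R K) (_ : F ≤ E ∧ F ≠ ⊥ ∧ F.FG), s.star F

def IsFiniteTypeOp (s : SemistarOperation R K) : Prop :=
  ∀ E : Submodule R K, E ≠ ⊥ → s.star E = starF s E

def IsStableOp (s : SemistarOperation R K) : Prop :=
  ∀ E F : Submodule R K, E ≠ ⊥ → F ≠ ⊥ → E ⊓ F ≠ ⊥ → s.star (E ⊓ F) = s.star E ⊓ s.star F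

def IsFracIdeal (I : Submodule R K) : Prop :=
  I ≠ ⊥ ∧ ∃ d : R, d ≠ 0 ∧ ∀ x ∈ I, algebraMap R K d * x ∈ (1 : Submodule R K)

def IsStarInv (s : SemistarOperation R K) (I : Submodule R K) : Prop :=
  s.star (I * ((1 : Submodule R K) / I)) = s.star 1

def IsQuasiStarInv (s : SemistarOperation R K) (I : Submodule R K) : Prop :=
  s.star (I * (s.star 1 / I)) = s.star 1

def QuasiStarIdeal (f : Submodule R K → Submodule R K) (I : Ideal R) : Prop :=
  I ≠ ⊥ ∧ (f (Submodule.map (Algebra.linearMap R K) I)).comap (Algebra.linearMap R K) = I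

def QuasiStarMax (f : Submodule R K → Submodule R K) (I : Ideal R) : Prop :=
  QuasiStarIdeal f I ∧ I ≠ ⊤ ∧ ∀ J : Ideal R, QuasiStarIdeal f J → J ≠ ⊤ → I ≤ J → I = J

def HStarDomain (s : SemistarOperation R K) : Prop :=
  ∀ I : Ideal R, I ≠ ⊥ → s.star (Submodule.map (Algebra.linearMap R K) I) = s.star 1 →
    ∃ J : Ideal R, J ≠ ⊥ ∧ J.FG ∧ J ≤ I ∧ s.star (Submodule.map (Algebra.linearMap R K) J) = s.star 1

def locAt (Q : Ideal R) : Submodule R K :=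
  span R {x : K | ∃ s : R, s ∉ Q ∧ x * algebraMap R K s = 1}

def starTilde (s : SemistarOperation R K) (E : Submodule R K) : Submodule R K :=
  ⨅ (Q : Ideal R) (_ : QuasiStarMax (starF s) Q), E * locAt Q

variable {D K : Type*} [CommRing D] [IsDomain D] [Field K] [Algebra D K] [IsFractionRing D K]

/-!
Write `M = I * I⁻¹ ≤ D`. Since `1 ∈ M^{⋆_f}`, compactness of finitely generated modules gives
finitely generated `J ⊆ I` and `H ⊆ I⁻¹` with `1 ∈ (JH)^⋆`; then `I H ⊆ D` forces `I ⊆ J^⋆`, and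
likewise `I⁻¹ ⊆ H^⋆`, so `I` and `I⁻¹` are `⋆_f`-finite. Conversely, a product of `⋆_f`-finite
modules is `⋆_f`-finite, and on a `⋆_f`-finite module `⋆_f` and `⋆` agree; since `D` is also
`⋆_f`-finite, `M^{⋆_f} = D^{⋆_f}` and `M^⋆ = D^⋆` say the same thing.
-/

theorem IsCompactElement.exists_le_of_le_iSup_of_directed {α ι : Type*} [CompleteLattice α]
    [Nonempty ι] {k : α} (hk : IsCompactElement k) {f : ι → α} (hf : Directed (· ≤ ·) f)
    (h : k ≤ ⨆ i, f i) : ∃ i, k ≤ f i := by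
  obtain ⟨_, ⟨i, rfl⟩, hi⟩ := (CompleteLattice.isCompactElement_iff_le_of_directed_sSup_le _ k).mp
    hk (Set.range f) (Set.range_nonempty f) hf.directedOn_range h
  exact ⟨i, hi⟩

namespace Submodule

variable {R A : Type*} [CommSemiring R] [Semiring A] [Algebra R A]

theorem fg_one : (1 : Submodule R A).FG :=
  one_eq_span (R := R) (A := A) ▸ fg_span_singleton 1

theorem one_ne_bot [Nontrivial A] : (1 : Submodule R A) ≠ ⊥ :=
  (Submodule.ne_bot_iff 1).mpr ⟨1, one_le.mp le_rfl, one_ne_zero⟩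

theorem mul_ne_bot [NoZeroDivisors A] {P Q : Submodule R A} (hP : P ≠ ⊥) (hQ : Q ≠ ⊥) :
    P * Q ≠ ⊥ :=
  mul_eq_bot.not.mpr (not_or.mpr ⟨hP, hQ⟩)

theorem FG.exists_le_mul_of_le_mul {F P Q : Submodule R A} (hF : F.FG) (h : F ≤ P * Q) :
    ∃ J ≤ P, ∃ H ≤ Q, J.FG ∧ H.FG ∧ F ≤ J * H := by
  let ι := {p : Submodule R A × Submodule R A // p.1 ≤ P ∧ p.2 ≤ Q ∧ p.1.FG ∧ p.2.FG}
  have : Nonempty ι := ⟨⟨(⊥, ⊥), bot_le, bot_le, fg_bot, fg_bot⟩⟩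
  have hdir : Directed (· ≤ ·) fun p : ι => p.1.1 * p.1.2 := by
    rintro ⟨⟨J₁, H₁⟩, hJ₁, hH₁, hJ₁fg, hH₁fg⟩ ⟨⟨J₂, H₂⟩, hJ₂, hH₂, hJ₂fg, hH₂fg⟩
    exact ⟨⟨(J₁ ⊔ J₂, H₁ ⊔ H₂), sup_le hJ₁ hJ₂, sup_le hH₁ hH₂, hJ₁fg.sup hJ₂fg, hH₁fg.sup hH₂fg⟩,
      mul_le_mul' le_sup_left le_sup_left, mul_le_mul' le_sup_right le_sup_right⟩
  have hPQ : P * Q ≤ ⨆ p : ι, p.1.1 * p.1.2 := mul_le.mpr fun a ha b hb =>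
    le_iSup (fun p : ι => p.1.1 * p.1.2)
      ⟨(span R {a}, span R {b}), (span_singleton_le_iff_mem a P).mpr ha,
        (span_singleton_le_iff_mem b Q).mpr hb, fg_span_singleton a, fg_span_singleton b⟩
      (mul_mem_mul (mem_span_singleton_self a) (mem_span_singleton_self b))
  obtain ⟨⟨⟨J, H⟩, hJ, hH, hJfg, hHfg⟩, hF⟩ :=
    ((fg_iff_compact F).mp hF).exists_le_of_le_iSup_of_directed hdir (h.trans hPQ)
  exact ⟨J, hJ, H, hH, hJfg, hHfg, hF⟩

end Submodule

def IsStarFFinite {R K : Type*} [CommRing R] [Field K] [Algebra R K]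
    (s : SemistarOperation R K) (E : Submodule R K) : Prop :=
  ∃ J : Submodule R K, J ≠ ⊥ ∧ J.FG ∧ starF s J = starF s E

namespace SemistarOperation

variable {R K : Type*} [CommRing R] [Field K] [Algebra R K] (s : SemistarOperation R K)

theorem star_le_star_of_le_star {E A : Submodule R K} (hE : E ≠ ⊥) (hA : A ≠ ⊥)
    (h : E ≤ s.star A) : s.star E ≤ s.star A :=
  s.star_idem A hA ▸ s.star_mono E (s.star A) hE (ne_bot_of_le_ne_bot hA (s.le_star A hA)) h

theorem star_mul_le {A B : Submodule R K} (hA : A ≠ ⊥) (hB : B ≠ ⊥) :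
    s.star A * B ≤ s.star (A * B) := by
  refine mul_le.mpr fun a ha b hb => ?_
  rcases eq_or_ne b 0 with rfl | hb0
  · simp
  have hbA : A.map (LinearMap.mul R K b) ≤ A * B := by
    rintro _ ⟨x, hx, rfl⟩
    simpa [mul_comm] using mul_mem_mul hx hb
  have hbA0 : A.map (LinearMap.mul R K b) ≠ ⊥ := fun h => hA <|
    map_injective_of_injective (mul_right_injective₀ hb0) (h.trans (Submodule.map_bot _).symm)
  have hba : b * a ∈ s.star (A.map (LinearMap.mul R K b)) :=
    s.star_smul b hb0 A hA ▸ mem_map_of_mem ha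
  exact mul_comm b a ▸ s.star_mono _ _ hbA0 (mul_ne_bot hA hB) hbA hba

theorem star_mul_star_le {A B : Submodule R K} (hA : A ≠ ⊥) (hB : B ≠ ⊥) :
    s.star A * s.star B ≤ s.star (A * B) := by
  have hB' : s.star B ≠ ⊥ := ne_bot_of_le_ne_bot hB (s.le_star B hB)
  have h : A * s.star B ≤ s.star (A * B) := by
    simpa only [mul_comm A] using s.star_mul_le hB hA
  exact (s.star_mul_le hA hB').trans
    (s.star_le_star_of_le_star (mul_ne_bot hA hB') (mul_ne_bot hA hB) h)

theorem le_star_of_one_le_star_mul {A B C : Submodule R K} (hA : A ≠ ⊥) (hB : B ≠ ⊥)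
    (h1 : 1 ≤ s.star (A * B)) (hC : C * B ≤ 1) : C ≤ s.star A := by
  rcases eq_or_ne C ⊥ with rfl | hC0
  · exact bot_le
  have hABC : A * B * C ≤ A := calc
    A * B * C = A * (C * B) := by rw [mul_assoc, mul_comm B C]
    _ ≤ A * 1 := mul_le_mul' le_rfl hC
    _ = A := mul_one A
  calc C = 1 * C := (one_mul C).symm
    _ ≤ s.star (A * B) * C := mul_le_mul' h1 le_rfl
    _ ≤ s.star (A * B * C) := s.star_mul_le (mul_ne_bot hA hB) hC0
    _ ≤ s.star A := s.star_mono _ _ (mul_ne_bot (mul_ne_bot hA hB) hC0) hA hABC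

theorem star_le_starF {G E : Submodule R K} (hGE : G ≤ E) (hG : G ≠ ⊥) (hGfg : G.FG) :
    s.star G ≤ starF s E :=
  le_iSup₂ (f := fun F (_ : F ≤ E ∧ F ≠ ⊥ ∧ F.FG) => s.star F) G ⟨hGE, hG, hGfg⟩

theorem starF_mono {E F : Submodule R K} (h : E ≤ F) : starF s E ≤ starF s F :=
  iSup₂_le fun _ hG => s.star_le_starF (hG.1.trans h) hG.2.1 hG.2.2

theorem le_starF (E : Submodule R K) : E ≤ starF s E := by
  intro x hx
  rcases eq_or_ne x 0 with rfl | hx0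
  · exact zero_mem _
  have hx' : span R {x} ≠ ⊥ := by simpa using hx0
  exact s.star_le_starF ((span_singleton_le_iff_mem x E).mpr hx) hx' (fg_span_singleton x)
    (s.le_star _ hx' (mem_span_singleton_self x))

theorem starF_eq_bot_iff {E : Submodule R K} : starF s E = ⊥ ↔ E = ⊥ :=
  ⟨fun h => le_bot_iff.mp (h ▸ s.le_starF E), fun h =>
    iSup₂_eq_bot.mpr fun _ hG => absurd (le_bot_iff.mp (h ▸ hG.1)) hG.2.1⟩

theorem starF_le_star_of_le_star {E A : Submodule R K} (hA : A ≠ ⊥) (h : E ≤ s.star A) :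
    starF s E ≤ s.star A :=
  iSup₂_le fun _ hG => s.star_le_star_of_le_star hG.2.1 hA (hG.1.trans h)

theorem starF_le_star {E : Submodule R K} (hE : E ≠ ⊥) : starF s E ≤ s.star E :=
  s.starF_le_star_of_le_star hE (s.le_star E hE)

theorem starF_eq_star_of_fg {E : Submodule R K} (hE : E ≠ ⊥) (hfg : E.FG) :
    starF s E = s.star E :=
  (s.starF_le_star hE).antisymm (s.star_le_starF le_rfl hE hfg)

theorem starF_eq_of_le_of_le_star {J E : Submodule R K} (hJ : J ≠ ⊥) (hJfg : J.FG)
    (hJE : J ≤ E) (hEJ : E ≤ s.star J) : starF s J = starF s E :=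
  (s.starF_mono hJE).antisymm (s.starF_eq_star_of_fg hJ hJfg ▸ s.starF_le_star_of_le_star hJ hEJ)

theorem exists_fg_le_star_of_le_starF {E F : Submodule R K} (hE : E ≠ ⊥) (hF : F.FG)
    (h : F ≤ starF s E) : ∃ G ≤ E, G ≠ ⊥ ∧ G.FG ∧ F ≤ s.star G := by
  let ι := {G : Submodule R K // G ≤ E ∧ G ≠ ⊥ ∧ G.FG}
  obtain ⟨e, he, he0⟩ := (Submodule.ne_bot_iff E).mp hE
  have : Nonempty ι :=
    ⟨⟨span R {e}, (span_singleton_le_iff_mem e E).mpr he, by simpa using he0, fg_span_singleton e⟩⟩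
  have hdir : Directed (· ≤ ·) fun G : ι => s.star G.1 := by
    rintro ⟨G₁, hG₁, hG₁0, hG₁fg⟩ ⟨G₂, hG₂, hG₂0, hG₂fg⟩
    have hG0 : G₁ ⊔ G₂ ≠ ⊥ := ne_bot_of_le_ne_bot hG₁0 le_sup_left
    exact ⟨⟨G₁ ⊔ G₂, sup_le hG₁ hG₂, hG0, hG₁fg.sup hG₂fg⟩,
      s.star_mono _ _ hG₁0 hG0 le_sup_left,
      s.star_mono _ _ hG₂0 hG0 le_sup_right⟩
  rw [starF, iSup_subtype'] at h
  obtain ⟨⟨G, hGE, hG0, hGfg⟩, hFG⟩ :=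
    ((fg_iff_compact F).mp hF).exists_le_of_le_iSup_of_directed hdir h
  exact ⟨G, hGE, hG0, hGfg, hFG⟩

end SemistarOperation

namespace IsStarFFinite

variable {R K : Type*} [CommRing R] [Field K] [Algebra R K] {s : SemistarOperation R K}

theorem exists_fg_le_le_star {E : Submodule R K} (h : IsStarFFinite s E) :
    ∃ G ≤ E, G ≠ ⊥ ∧ G.FG ∧ E ≤ s.star G := by
  obtain ⟨J, hJ, hJfg, hJE⟩ := h
  have hE : E ≠ ⊥ := fun hE => hJ (s.starF_eq_bot_iff.mp (hJE.trans (s.starF_eq_bot_iff.mpr hE)))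
  obtain ⟨G, hGE, hG, hGfg, hJG⟩ :=
    s.exists_fg_le_star_of_le_starF hE hJfg (hJE ▸ s.le_starF J)
  exact ⟨G, hGE, hG, hGfg, (s.le_starF E).trans (hJE ▸ s.starF_le_star_of_le_star hG hJG)⟩

theorem starF_eq_star {E : Submodule R K} (h : IsStarFFinite s E) : starF s E = s.star E := by
  obtain ⟨G, hGE, hG, hGfg, hEG⟩ := h.exists_fg_le_le_star
  have hE : E ≠ ⊥ := ne_bot_of_le_ne_bot hG hGE
  refine (s.starF_le_star hE).antisymm ?_
  calc s.star E ≤ s.star G := s.star_le_star_of_le_star hE hG hEG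
    _ = starF s G := (s.starF_eq_star_of_fg hG hGfg).symm
    _ ≤ starF s E := s.starF_mono hGE

theorem mul {A B : Submodule R K} (hA : IsStarFFinite s A) (hB : IsStarFFinite s B) :
    IsStarFFinite s (A * B) := by
  obtain ⟨J, hJA, hJ, hJfg, hAJ⟩ := hA.exists_fg_le_le_star
  obtain ⟨H, hHB, hH, hHfg, hBH⟩ := hB.exists_fg_le_le_star
  exact ⟨J * H, mul_ne_bot hJ hH, hJfg.mul hHfg, s.starF_eq_of_le_of_le_star (mul_ne_bot hJ hH)
    (hJfg.mul hHfg) (mul_le_mul' hJA hHB) ((mul_le_mul' hAJ hBH).trans (s.star_mul_star_le hJ hH))⟩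

end IsStarFFinite

theorem isStarFFinite_of_one_le_starF_mul {R K : Type*} [CommRing R] [Field K] [Algebra R K]
    (s : SemistarOperation R K) {A B : Submodule R K} (hAB : A * B ≤ 1)
    (h1 : 1 ≤ starF s (A * B)) : IsStarFFinite s A ∧ IsStarFFinite s B := by
  have hAB0 : A * B ≠ ⊥ := fun h =>
    one_ne_bot (le_bot_iff.mp (h1.trans (s.starF_eq_bot_iff.mpr h).le))
  obtain ⟨G, hG, hG0, hGfg, h1G⟩ := s.exists_fg_le_star_of_le_starF hAB0 fg_one h1
  obtain ⟨J, hJA, H, hHB, hJfg, hHfg, hGJH⟩ := hGfg.exists_le_mul_of_le_mul hG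
  have hJH : J * H ≠ ⊥ := ne_bot_of_le_ne_bot hG0 hGJH
  have hJ : J ≠ ⊥ := fun h => hJH (by rw [h, bot_mul])
  have hH : H ≠ ⊥ := fun h => hJH (by rw [h, mul_bot])
  have h1JH : 1 ≤ s.star (J * H) := h1G.trans (s.star_mono G _ hG0 hJH hGJH)
  have hAJ : A ≤ s.star J :=
    s.le_star_of_one_le_star_mul hJ hH h1JH ((mul_le_mul' le_rfl hHB).trans hAB)
  have hBH : B ≤ s.star H := s.le_star_of_one_le_star_mul hH hJ (mul_comm J H ▸ h1JH)
    ((mul_le_mul' le_rfl hJA).trans (mul_comm B A ▸ hAB))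
  exact ⟨⟨J, hJ, hJfg, s.starF_eq_of_le_of_le_star hJ hJfg hJA hAJ⟩,
    ⟨H, hH, hHfg, s.starF_eq_of_le_of_le_star hH hHfg hHB hBH⟩⟩

theorem stmt8_general (s : SemistarOperation D K) (I : Submodule D K) :
    starF s (I * ((1 : Submodule D K) / I)) = starF s 1 ↔
    ((∃ J : Submodule D K, J ≠ ⊥ ∧ J.FG ∧ starF s J = starF s I) ∧
     (∃ J : Submodule D K, J ≠ ⊥ ∧ J.FG ∧ starF s J = starF s ((1 : Submodule D K) / I)) ∧
     IsStarInv s I) := by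
  have hone : starF s 1 = s.star 1 := s.starF_eq_star_of_fg one_ne_bot fg_one
  constructor
  · intro h
    obtain ⟨hI, hI'⟩ := isStarFFinite_of_one_le_starF_mul s mul_one_div_le_one (h ▸ s.le_starF 1)
    exact ⟨hI, hI', by rw [IsStarInv, ← (IsStarFFinite.mul hI hI').starF_eq_star, h, hone]⟩
  · rintro ⟨hI, hI', hinv⟩
    rw [(IsStarFFinite.mul hI hI').starF_eq_star, hinv, hone]

theorem stmt8 (s : SemistarOperation D K) (I : Submodule D K) (hI : IsFracIdeal I) :
    starF s (I * ((1 : Submodule D K) / I)) = starF s 1 ↔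
    ((∃ J : Submodule D K, J ≠ ⊥ ∧ J.FG ∧ starF s J = starF s I) ∧
     (∃ J : Submodule D K, J ≠ ⊥ ∧ J.FG ∧ starF s J = starF s ((1 : Submodule D K) / I)) ∧
     IsStarInv s I) :=
  stmt8_general s I
end

section
/- Let ⋆ be a semistar operation on an integral domain D. Then D is an H(⋆)-domain if and only if every quasi-⋆_f-maximal ideal of D is a quasi-⋆-ideal. -/
open Submodule

variable {R K : Type*} [CommRing R] [Field K] [Algebra R K]

variable {D K : Type*} [CommRing D] [IsDomain D] [Field K] [Algebra D K] [IsFractionRing D K]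

set_option linter.unusedSectionVars false

lemma aux_mem_starF {s : SemistarOperation D K} {E : Submodule D K} {x : K} :
    x ∈ starF s E ↔ x = 0 ∨ ∃ F, (F ≤ E ∧ F ≠ ⊥ ∧ F.FG) ∧ x ∈ s.star F := by
  constructor
  · intro hx
    by_cases h0 : x = 0
    · exact Or.inl h0
    right
    rw [starF, iSup_subtype'] at hx
    by_cases hne : Nonempty {F : Submodule D K // F ≤ E ∧ F ≠ ⊥ ∧ F.FG}
    · have hdir : Directed (· ≤ ·)
          (fun p : {F : Submodule D K // F ≤ E ∧ F ≠ ⊥ ∧ F.FG} => s.star p.1) := by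
        rintro ⟨F₁, h₁⟩ ⟨F₂, h₂⟩
        refine ⟨⟨F₁ ⊔ F₂, sup_le h₁.1 h₂.1, ?_, h₁.2.2.sup h₂.2.2⟩, ?_, ?_⟩
        · intro hb
          exact h₁.2.1 (le_bot_iff.mp (hb ▸ le_sup_left))
        · exact s.star_mono _ _ h₁.2.1 (fun hb => h₁.2.1 (le_bot_iff.mp (hb ▸ le_sup_left)))
            le_sup_left
        · exact s.star_mono _ _ h₂.2.1 (fun hb => h₁.2.1 (le_bot_iff.mp (hb ▸ le_sup_left)))
            le_sup_right
      obtain ⟨⟨F, hF⟩, hxF⟩ := (Submodule.mem_iSup_of_directed _ hdir).mp hx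
      exact ⟨F, hF, hxF⟩
    · haveI := not_nonempty_iff.mp hne
      rw [iSup_of_empty] at hx
      exact absurd hx (by simpa using h0)
  · rintro (rfl | ⟨F, hF, hxF⟩)
    · exact zero_mem _
    · exact (le_iSup₂_of_le F hF le_rfl : s.star F ≤ starF s E) hxF

lemma aux_le_starF (s : SemistarOperation D K) (E : Submodule D K) : E ≤ starF s E := by
  intro x hx
  rcases eq_or_ne x 0 with rfl | h0
  · exact zero_mem _
  refine aux_mem_starF.mpr (Or.inr ⟨span D {x}, ⟨?_, ?_, fg_span_singleton x⟩, ?_⟩)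
  · simpa [span_le] using hx
  · simpa using h0
  · exact s.le_star _ (by simpa using h0) (mem_span_singleton_self x)

lemma aux_starF_mono (s : SemistarOperation D K) {E E' : Submodule D K} (h : E ≤ E') :
    starF s E ≤ starF s E' := by
  intro x hx
  rcases aux_mem_starF.mp hx with rfl | ⟨F, hF, hxF⟩
  · exact zero_mem _
  · exact aux_mem_starF.mpr (Or.inr ⟨F, ⟨hF.1.trans h, hF.2.1, hF.2.2⟩, hxF⟩)

lemma aux_starF_idem (s : SemistarOperation D K) {E : Submodule D K} (hE : E ≠ ⊥) :
    starF s (starF s E) = starF s E := by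
  refine le_antisymm ?_ (aux_starF_mono s (aux_le_starF s E))
  intro x hx
  rcases aux_mem_starF.mp hx with rfl | ⟨F, ⟨hFle, hFbot, hFfg⟩, hxF⟩
  · exact zero_mem _
  obtain ⟨e, heE, he0⟩ := Submodule.ne_bot_iff E |>.mp hE
  obtain ⟨T, hT⟩ := hFfg
  have key : ∀ t ∈ T, ∃ G : Submodule D K, (G ≤ E ∧ G ≠ ⊥ ∧ G.FG) ∧ t ∈ s.star G := by
    intro t ht
    have htF : t ∈ starF s E := hFle (hT ▸ subset_span ht)
    rcases aux_mem_starF.mp htF with rfl | ⟨G, hG, htG⟩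
    · refine ⟨span D {e}, ⟨by simpa [span_le] using heE, by simpa using he0,
        fg_span_singleton e⟩, zero_mem _⟩
    · exact ⟨G, hG, htG⟩
  choose g hg hgt using key
  set G : Submodule D K := T.attach.sup (fun t => g t.1 t.2) with hGdef
  have hTne : T.Nonempty := by
    rcases T.eq_empty_or_nonempty with rfl | h
    · exact absurd (hT ▸ by simp) hFbot
    · exact h
  obtain ⟨t₀, ht₀⟩ := hTne
  have hGle : G ≤ E := Finset.sup_le fun t _ => (hg t.1 t.2).1
  have hGbot : G ≠ ⊥ := by
    intro hb
    have : g t₀ ht₀ ≤ G := Finset.le_sup (f := fun t : {x // x ∈ T} => g t.1 t.2) (Finset.mem_attach T ⟨t₀, ht₀⟩)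
    exact (hg t₀ ht₀).2.1 (le_bot_iff.mp (hb ▸ this))
  have hGfg : G.FG := Submodule.fg_finset_sup _ _ fun t _ => (hg t.1 t.2).2.2
  have hstarGbot : s.star G ≠ ⊥ := fun hb =>
    hGbot (le_bot_iff.mp (hb ▸ s.le_star G hGbot))
  have hFle' : F ≤ s.star G := by
    rw [← hT, span_le]
    intro t ht
    exact s.star_mono _ _ (hg t ht).2.1 hGbot
      (Finset.le_sup (f := fun t : {x // x ∈ T} => g t.1 t.2) (Finset.mem_attach T ⟨t, ht⟩)) (hgt t ht)
  have : s.star F ≤ s.star G := by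
    have := s.star_mono F (s.star G) hFbot hstarGbot hFle'
    rwa [s.star_idem G hGbot] at this
  exact aux_mem_starF.mpr (Or.inr ⟨G, ⟨hGle, hGbot, hGfg⟩, this hxF⟩)

set_option linter.unusedSectionVars false

lemma aux_map_ne_bot {I : Ideal D} (hI : I ≠ ⊥) :
    Submodule.map (Algebra.linearMap D K) I ≠ ⊥ := by
  obtain ⟨a, haI, ha0⟩ := Submodule.ne_bot_iff I |>.mp hI
  intro hb
  have : algebraMap D K a ∈ (⊥ : Submodule D K) := hb ▸ ⟨a, haI, rfl⟩
  simp only [mem_bot] at this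
  exact ha0 (IsFractionRing.injective D K (by simpa using this))

lemma aux_map_le_one (I : Ideal D) :
    Submodule.map (Algebra.linearMap D K) I ≤ (1 : Submodule D K) := by
  rintro _ ⟨a, _, rfl⟩
  rw [Submodule.one_eq_range]
  exact ⟨a, rfl⟩

lemma aux_one_ne_bot : (1 : Submodule D K) ≠ ⊥ := by
  intro hb
  have : (1 : K) ∈ (⊥ : Submodule D K) := hb ▸ (Submodule.one_le.mp le_rfl)
  simp at this

lemma aux_exists_ideal_of_fg {I : Ideal D} {G : Submodule D K}
    (hle : G ≤ Submodule.map (Algebra.linearMap D K) I) (hfg : G.FG) :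
    ∃ J : Ideal D, J ≤ I ∧ J.FG ∧ Submodule.map (Algebra.linearMap D K) J = G := by
  obtain ⟨T, hT⟩ := hfg
  set S : Set D := (algebraMap D K) ⁻¹' (T : Set K) ∩ (I : Set D) with hS
  have him : (Algebra.linearMap D K) '' S = (T : Set K) := by
    apply Set.Subset.antisymm
    · rintro _ ⟨a, ⟨haT, _⟩, rfl⟩; exact haT
    · intro t ht
      obtain ⟨a, haI, rfl⟩ := hle (hT ▸ subset_span ht)
      exact ⟨a, ⟨ht, haI⟩, rfl⟩
  refine ⟨Ideal.span S, ?_, ?_, ?_⟩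
  · rw [Ideal.span_le]; exact fun a ha => ha.2
  · exact Submodule.fg_span (Set.Finite.subset
      (Set.Finite.preimage (Set.injOn_of_injective (IsFractionRing.injective D K))
        T.finite_toSet) Set.inter_subset_left)
  · show Submodule.map (Algebra.linearMap D K) (Submodule.span D S) = G
    rw [Submodule.map_span, him, hT]

lemma aux_quasi_comap (s : SemistarOperation D K) {I : Ideal D} (hI : I ≠ ⊥) :
    I ≤ Submodule.comap (Algebra.linearMap D K)
        (starF s (Submodule.map (Algebra.linearMap D K) I)) ∧
    QuasiStarIdeal (starF s)
      (Submodule.comap (Algebra.linearMap D K)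
        (starF s (Submodule.map (Algebra.linearMap D K) I))) := by
  set mI := Submodule.map (Algebra.linearMap D K) I with hmI
  set Q : Ideal D := Submodule.comap (Algebra.linearMap D K) (starF s mI) with hQ
  have hIQ : I ≤ Q := fun a ha => aux_le_starF s mI ⟨a, ha, rfl⟩
  refine ⟨hIQ, fun hb => hI (le_bot_iff.mp (hb ▸ hIQ)), ?_⟩
  apply le_antisymm
  · have h1 : Submodule.map (Algebra.linearMap D K) Q ≤ starF s mI :=
      Submodule.map_comap_le _ _
    have h2 : starF s (Submodule.map (Algebra.linearMap D K) Q) ≤ starF s mI := by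
      have := aux_starF_mono s h1
      rwa [aux_starF_idem s (aux_map_ne_bot hI)] at this
    exact Submodule.comap_mono h2
  · exact fun a ha => aux_le_starF s _ ⟨a, ha, rfl⟩


theorem stmt9 (s : SemistarOperation D K) :
    HStarDomain s ↔
    ∀ M : Ideal D, QuasiStarMax (starF s) M → QuasiStarIdeal s.star M := by
  constructor
  · intro h M hM
    obtain ⟨⟨hMbot, hMq⟩, hMtop, hMmax⟩ := hM
    refine ⟨hMbot, ?_⟩
    have hmMbot := aux_map_ne_bot (K := K) hMbot
    apply le_antisymm
    · intro x hx
      rw [Submodule.mem_comap] at hx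
      by_contra hxM
      set I : Ideal D := M ⊔ Ideal.span {x} with hI
      have hMI : M ≤ I := le_sup_left
      have hIbot : I ≠ ⊥ := fun hb => hMbot (le_bot_iff.mp (hb ▸ hMI))
      obtain ⟨hIQ, hQquasi⟩ := aux_quasi_comap s hIbot
      set Q : Ideal D := Submodule.comap (Algebra.linearMap D K)
        (starF s (Submodule.map (Algebra.linearMap D K) I)) with hQdef
      by_cases hQtop : Q = ⊤
      · have h1Q : (1 : K) ∈ starF s (Submodule.map (Algebra.linearMap D K) I) := by
          have h1 : (1 : D) ∈ Q := by rw [hQtop]; trivial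
          rw [hQdef, Submodule.mem_comap] at h1
          simpa using h1
        rcases aux_mem_starF.mp h1Q with h0 | ⟨G, ⟨hGle, hGbot, hGfg⟩, h1G⟩
        · exact one_ne_zero h0
        have hstarGbot : s.star G ≠ ⊥ := fun hb =>
          hGbot (le_bot_iff.mp (hb ▸ s.le_star G hGbot))
        have hstar1_le : s.star 1 ≤ s.star G := by
          have h1le : (1 : Submodule D K) ≤ s.star G := by
            rw [Submodule.one_eq_span, span_le]
            simpa using h1G
          have := s.star_mono 1 (s.star G) aux_one_ne_bot hstarGbot h1le
          rwa [s.star_idem G hGbot] at this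
        have hIle : Submodule.map (Algebra.linearMap D K) I ≤
            s.star (Submodule.map (Algebra.linearMap D K) M) := by
          rw [hI, Submodule.map_sup]
          apply sup_le
          · exact s.le_star _ hmMbot
          · rw [Ideal.span, Submodule.map_span, Set.image_singleton, span_le]
            simpa using hx
        have hstarM_eq : s.star (Submodule.map (Algebra.linearMap D K) M) = s.star 1 := by
          apply le_antisymm
          · exact s.star_mono _ _ hmMbot aux_one_ne_bot (aux_map_le_one M)
          · have hsmb : s.star (Submodule.map (Algebra.linearMap D K) M) ≠ ⊥ := fun hb =>
              hmMbot (le_bot_iff.mp (hb ▸ s.le_star _ hmMbot))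
            have h2 := s.star_mono G _ hGbot hsmb (le_trans hGle hIle)
            rw [s.star_idem _ hmMbot] at h2
            exact le_trans hstar1_le h2
        obtain ⟨J, hJbot, hJfg, hJle, hJstar⟩ := h M hMbot hstarM_eq
        have h1J : (1 : K) ∈ s.star (Submodule.map (Algebra.linearMap D K) J) := by
          rw [hJstar]
          exact s.le_star 1 aux_one_ne_bot (Submodule.one_le.mp le_rfl)
        have h1F : (1 : K) ∈ starF s (Submodule.map (Algebra.linearMap D K) M) :=
          aux_mem_starF.mpr (Or.inr ⟨Submodule.map (Algebra.linearMap D K) J,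
            ⟨Submodule.map_mono hJle, aux_map_ne_bot hJbot, Submodule.FG.map _ hJfg⟩, h1J⟩)
        have h1M : (1 : D) ∈ M := by
          rw [← hMq, Submodule.mem_comap]
          simpa using h1F
        exact hMtop ((Ideal.eq_top_iff_one M).mpr h1M)
      · have hMQ : M = Q := hMmax Q hQquasi hQtop (le_trans hMI hIQ)
        have hxQ : x ∈ Q :=
          hIQ ((le_sup_right : Ideal.span {x} ≤ I) (Ideal.mem_span_singleton_self x))
        rw [← hMQ] at hxQ
        exact hxM hxQ
    · intro a ha
      exact Submodule.mem_comap.mpr (s.le_star _ hmMbot ⟨a, ha, rfl⟩)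
  · intro h I hIbot hIstar
    by_contra hcon
    push_neg at hcon
    obtain ⟨hIP, hPquasi⟩ := aux_quasi_comap s hIbot
    set P : Ideal D := Submodule.comap (Algebra.linearMap D K)
      (starF s (Submodule.map (Algebra.linearMap D K) I)) with hPdef
    have hPtop : P ≠ ⊤ := by
      intro htop
      have h1P : (1 : K) ∈ starF s (Submodule.map (Algebra.linearMap D K) I) := by
        have h1 : (1 : D) ∈ P := by rw [htop]; trivial
        rw [hPdef, Submodule.mem_comap] at h1
        simpa using h1
      rcases aux_mem_starF.mp h1P with h0 | ⟨G, ⟨hGle, hGbot, hGfg⟩, h1G⟩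
      · exact one_ne_zero h0
      obtain ⟨J, hJle, hJfg, hJmap⟩ := aux_exists_ideal_of_fg hGle hGfg
      have hJbot : J ≠ ⊥ := fun hb => hGbot (by rw [← hJmap, hb, Submodule.map_bot])
      have hstarJ : s.star (Submodule.map (Algebra.linearMap D K) J) = s.star 1 := by
        rw [hJmap]
        apply le_antisymm
        · exact s.star_mono _ _ hGbot aux_one_ne_bot (le_trans hGle (aux_map_le_one I))
        · have hstarGbot : s.star G ≠ ⊥ := fun hb =>
            hGbot (le_bot_iff.mp (hb ▸ s.le_star G hGbot))
          have h1le : (1 : Submodule D K) ≤ s.star G := by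
            rw [Submodule.one_eq_span, span_le]
            simpa using h1G
          have := s.star_mono 1 (s.star G) aux_one_ne_bot hstarGbot h1le
          rwa [s.star_idem G hGbot] at this
      exact hcon J hJbot hJfg hJle hstarJ
    set S : Set (Ideal D) := {J | QuasiStarIdeal (starF s) J ∧ J ≠ ⊤} with hSdef
    have hzorn : ∀ c ⊆ S, IsChain (· ≤ ·) c → ∀ y ∈ c, ∃ ub ∈ S, ∀ z ∈ c, z ≤ ub := by
      intro c hcS hchain y hyc
      have hcne : c.Nonempty := ⟨y, hyc⟩
      have hdir : DirectedOn (· ≤ ·) c := hchain.directedOn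
      refine ⟨sSup c, ⟨⟨?_, ?_⟩, ?_⟩, fun z hz => le_sSup hz⟩
      · intro hb
        exact (hcS hyc).1.1 (le_bot_iff.mp (hb ▸ le_sSup hyc))
      · apply le_antisymm
        · intro a ha
          rw [Submodule.mem_comap] at ha
          rcases aux_mem_starF.mp ha with h0 | ⟨F, ⟨hFle, hFbot, hFfg⟩, haF⟩
          · have ha0 : a = 0 := IsFractionRing.injective D K (by simpa using h0)
            simp [ha0]
          obtain ⟨J', hJ'le, hJ'fg, hJ'map⟩ := aux_exists_ideal_of_fg hFle hFfg
          have hcomp := (Submodule.fg_iff_compact J').mp hJ'fg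
          obtain ⟨J, hJc, hJ'J⟩ :=
            (CompleteLattice.isCompactElement_iff_le_of_directed_sSup_le _ J').mp hcomp
              c hcne hdir hJ'le
          have hFJ : F ≤ Submodule.map (Algebra.linearMap D K) J :=
            hJ'map ▸ Submodule.map_mono hJ'J
          have haJ : a ∈ J := by
            rw [← (hcS hJc).1.2]
            exact Submodule.mem_comap.mpr
              (aux_mem_starF.mpr (Or.inr ⟨F, ⟨hFJ, hFbot, hFfg⟩, haF⟩))
          exact le_sSup hJc haJ
        · exact fun a ha => Submodule.mem_comap.mpr (aux_le_starF s _ ⟨a, ha, rfl⟩)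
      · intro htop
        have h1 : (1 : D) ∈ sSup c := by rw [htop]; trivial
        obtain ⟨J, hJc, h1J⟩ := (Submodule.mem_sSup_of_directed hcne hdir).mp h1
        exact (hcS hJc).2 ((Ideal.eq_top_iff_one J).mpr h1J)
    obtain ⟨M, hPM, hMmax⟩ := zorn_le_nonempty₀ S hzorn P ⟨hPquasi, hPtop⟩
    have hMqsm : QuasiStarMax (starF s) M :=
      ⟨hMmax.1.1, hMmax.1.2, fun J hJq hJtop hMJ =>
        le_antisymm hMJ (hMmax.2 ⟨hJq, hJtop⟩ hMJ)⟩
    obtain ⟨hMbot, hMq⟩ := h M hMqsm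
    have hIM : I ≤ M := le_trans hIP hPM
    have h1 : (1 : K) ∈ s.star (Submodule.map (Algebra.linearMap D K) M) := by
      have hle : s.star (Submodule.map (Algebra.linearMap D K) I) ≤
          s.star (Submodule.map (Algebra.linearMap D K) M) :=
        s.star_mono _ _ (aux_map_ne_bot hIbot) (aux_map_ne_bot hMbot)
          (Submodule.map_mono hIM)
      refine hle ?_
      rw [hIstar]
      exact s.le_star 1 aux_one_ne_bot (Submodule.one_le.mp le_rfl)
    have h1M : (1 : D) ∈ M := by
      rw [← hMq, Submodule.mem_comap]
      simpa using h1
    exact hMqsm.2.1 ((Ideal.eq_top_iff_one M).mpr h1M)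
end

section
/- Let ⋆ be a stable semistar operation on an integral domain D and let I be a nonzero finitely generated fractional ideal of D. Then I is quasi-⋆-invertible if and only if I is ⋆-invertible. -/
open Submodule

variable {R K : Type*} [CommRing R] [Field K] [Algebra R K]

variable {D K : Type*} [CommRing D] [IsDomain D] [Field K] [Algebra D K] [IsFractionRing D K]

/-! If `I` is generated by `x₁, …, xₙ`, then `(E : I) = ⋂ᵢ xᵢ⁻¹E`. Since a stable `⋆` commutes
with finite intersections and with multiplication by nonzero scalars, `(E : I)^⋆ = (E^⋆ : I)`.
Therefore `(I(D^⋆ : I))^⋆ = (I(D : I)^⋆)^⋆ = (I(D : I))^⋆`, and quasi-`⋆`-invertibility and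
`⋆`-invertibility are literally the same condition. -/

lemma Submodule.div_span_finset_eq_biInf {R A : Type*} [CommSemiring R] [CommSemiring A]
    [Algebra R A] (E : Submodule R A) (S : Finset A) :
    E / span R (S : Set A) = ⨅ x ∈ S, E.comap (LinearMap.mul R A x) := by
  ext z
  have hdiv : z ∈ E / span R (S : Set A) ↔ span R (S : Set A) ≤ E.comap (LinearMap.mul R A z) :=
    mem_div_iff_forall_mul_mem
  simp only [hdiv, span_le, Set.subset_def, SetLike.mem_coe, mem_iInf, mem_comap,
    LinearMap.mul_apply', mul_comm z]

namespace SemistarOperation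

variable {D K : Type*} [CommRing D] [Field K] [Algebra D K] (s : SemistarOperation D K)

lemma star_top : s.star ⊤ = ⊤ :=
  top_le_iff.mp (s.le_star ⊤ top_ne_bot)

lemma star_comap_mul (x : K) {E : Submodule D K} (hE : E ≠ ⊥) :
    s.star (E.comap (LinearMap.mul D K x)) = (s.star E).comap (LinearMap.mul D K x) := by
  by_cases hx : x = 0
  · have comap_zero (F : Submodule D K) : F.comap (LinearMap.mul D K 0) = ⊤ :=
      eq_top_iff.mpr fun y _ => by simp
    rw [hx, comap_zero, comap_zero, star_top]
  · have comap_eq_map (F : Submodule D K) :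
        F.comap (LinearMap.mul D K x) = F.map (LinearMap.mul D K x⁻¹) := by
      ext y
      refine ⟨fun hy => ⟨x * y, hy, by simp [hx]⟩, ?_⟩
      rintro ⟨z, hz, rfl⟩
      simpa [hx] using hz
    rw [comap_eq_map, comap_eq_map, s.star_smul x⁻¹ (inv_ne_zero hx) E hE]

lemma mul_star_le_star_mul (A : Submodule D K) {F : Submodule D K} (hF : F ≠ ⊥) :
    A * s.star F ≤ s.star (A * F) := by
  rw [mul_le]
  intro x hx y hy
  by_cases hx0 : x = 0
  · simp [hx0]
  have hAF : A * F ≠ ⊥ := by simp [A.ne_bot_iff.mpr ⟨x, hx, hx0⟩, hF]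
  have hxF : F.map (LinearMap.mul D K x) ≤ A * F := by
    rintro _ ⟨f, hf, rfl⟩
    exact mul_mem_mul hx hf
  have hxFne : F.map (LinearMap.mul D K x) ≠ ⊥ := by
    rwa [Ne, ← map_bot (LinearMap.mul D K x),
      (map_injective_of_injective (mul_right_injective₀ hx0)).eq_iff]
  refine s.star_mono _ _ hxFne hAF hxF ?_
  rw [s.star_smul x hx0 F hF]
  exact ⟨y, hy, rfl⟩

lemma star_mul_star (A : Submodule D K) {F : Submodule D K} (hF : F ≠ ⊥) :
    s.star (A * s.star F) = s.star (A * F) := by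
  by_cases hA : A = ⊥
  · simp [hA]
  have hAF : A * F ≠ ⊥ := by simp [hA, hF]
  have hAsF : A * s.star F ≠ ⊥ := by simp [hA, ne_bot_of_le_ne_bot hF (s.le_star F hF)]
  apply le_antisymm
  · have := s.star_mono _ _ hAsF (ne_bot_of_le_ne_bot hAF (s.le_star _ hAF))
      (s.mul_star_le_star_mul A hF)
    rwa [s.star_idem _ hAF] at this
  · exact s.star_mono _ _ hAF hAsF (mul_le_mul_right (s.le_star F hF) A)

end SemistarOperation

section

variable {D K : Type*} [CommRing D] [Field K] [Algebra D K] {s : SemistarOperation D K}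

lemma IsStableOp.star_biInf_finset (hs : IsStableOp s) {ι : Type*} (S : Finset ι)
    (f : ι → Submodule D K) (h : (⨅ i ∈ S, f i) ≠ ⊥) :
    s.star (⨅ i ∈ S, f i) = ⨅ i ∈ S, s.star (f i) := by
  classical
  induction S using Finset.induction with
  | empty => simpa using s.star_top
  | insert a T _ ih =>
    rw [Finset.iInf_insert] at h ⊢
    have hT : (⨅ i ∈ T, f i) ≠ ⊥ := ne_bot_of_le_ne_bot h inf_le_right
    rw [hs _ _ (ne_bot_of_le_ne_bot h inf_le_left) hT h, ih hT, Finset.iInf_insert]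

lemma IsStableOp.star_div_of_fg (hs : IsStableOp s) {E I : Submodule D K} (hE : E ≠ ⊥)
    (hEI : E / I ≠ ⊥) (hI : I.FG) : s.star (E / I) = s.star E / I := by
  obtain ⟨S, rfl⟩ := hI
  rw [div_span_finset_eq_biInf] at hEI
  rw [div_span_finset_eq_biInf, div_span_finset_eq_biInf, hs.star_biInf_finset _ _ hEI]
  simp_rw [s.star_comap_mul _ hE]

lemma IsFracIdeal.one_div_ne_bot [IsFractionRing D K] {I : Submodule D K} (hI : IsFracIdeal I) :
    1 / I ≠ ⊥ := by
  obtain ⟨-, d, hd, hdI⟩ := hI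
  rw [Submodule.ne_bot_iff]
  exact ⟨algebraMap D K d, mem_div_iff_forall_mul_mem.mpr hdI,
    (map_ne_zero_iff _ (IsFractionRing.injective D K)).mpr hd⟩

end

theorem stmt15 (s : SemistarOperation D K) (I : Submodule D K)
    (hs : IsStableOp s) (hI : IsFracIdeal I) (hfg : I.FG) :
    IsQuasiStarInv s I ↔ IsStarInv s I := by
  have hdiv : s.star 1 / I = s.star (1 / I) :=
    (hs.star_div_of_fg one_ne_zero hI.one_div_ne_bot hfg).symm
  rw [IsQuasiStarInv, IsStarInv, hdiv, s.star_mul_star I hI.one_div_ne_bot]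
end

section
/- Let ⋆ be a semistar operation on an integral domain D such that D^⋆ = D^{⋆̃}, where ⋆̃ is the stable finite-type semistar operation associated to ⋆. Then a nonzero D-submodule I of K is quasi-⋆_f-invertible if and only if I is quasi-⋆̃-invertible. -/
/-!
Put `J = I (D^⋆ : I)`; then `J ⊆ D^⋆ = D^⋆̃ = ⋂ D_M` over the quasi-`⋆_f`-maximal ideals `M`.
Hence `J^⋆̃ = D^⋆` iff `1 ∈ J D_M` for every `M`, and `J^{⋆_f} = D^⋆` iff `1 ∈ J^{⋆_f}`.
By Zorn, a nonzero ideal of `D` has `1` in its `⋆_f`-closure iff it lies in no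
quasi-`⋆_f`-maximal ideal, which applied to `J ∩ D` gives one implication. For the other, take
a finitely generated `W ⊆ J` with `1 ∈ W^⋆`: as `W ⊆ D_M` for all `M`, its conductor `(D :_D W)`
lies in no `M`, so `1 ∈ ((D :_D W) W)^{⋆_f} ⊆ (W ∩ D)^{⋆_f}` and `W ∩ D` meets `D ∖ M`.
-/

open Submodule

variable {R K : Type*} [CommRing R] [Field K] [Algebra R K]

variable {D K : Type*} [CommRing D] [IsDomain D] [Field K] [Algebra D K] [IsFractionRing D K]

theorem Submodule.FG.exists_le_of_le_iSup {R M ι : Type*} [Semiring R] [AddCommMonoid M]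
    [Module R M] [Nonempty ι] {f : ι → Submodule R M} (hf : Directed (· ≤ ·) f)
    {F : Submodule R M} (hF : F.FG) (h : F ≤ ⨆ i, f i) : ∃ i, F ≤ f i := by
  obtain ⟨_, ⟨i, rfl⟩, hi⟩ :=
    (CompleteLattice.isCompactElement_iff_le_of_directed_sSup_le _ F).mp
      ((fg_iff_compact F).mp hF) _ (Set.range_nonempty f) hf.directedOn_range
      (by rwa [sSup_range])
  exact ⟨i, hi⟩

section Algebra

variable {R S : Type*} [CommSemiring R] [Semiring S] [Algebra R S]

lemma Submodule.mul_ne_bot_s17 [NoZeroDivisors S] {E F : Submodule R S} (hE : E ≠ ⊥) (hF : F ≠ ⊥) :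
    E * F ≠ ⊥ :=
  fun h => (mul_eq_bot.mp h).elim hE hF

lemma Submodule.one_ne_bot_s17 [Nontrivial S] : (1 : Submodule R S) ≠ ⊥ :=
  Submodule.ne_bot_iff _ |>.mpr ⟨1, one_le.mp le_rfl, one_ne_zero⟩

lemma Submodule.fg_one_s17 : (1 : Submodule R S).FG :=
  one_eq_span (R := R) (A := S) ▸ fg_span_singleton 1

end Algebra

variable {A L : Type*} [CommRing A] [Field L] [Algebra A L]

namespace SemistarOperation

variable (s : SemistarOperation A L) {E F : Submodule A L}

lemma star_ne_bot (hE : E ≠ ⊥) : s.star E ≠ ⊥ :=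
  fun h => hE (le_bot_iff.mp (h ▸ s.le_star E hE))

lemma one_mem_star_one : (1 : L) ∈ s.star 1 :=
  s.le_star 1 one_ne_bot_s17 (one_le.mp le_rfl)

lemma star_star_one : s.star (s.star 1) = s.star 1 :=
  s.star_idem 1 one_ne_bot_s17

-- `x F^⋆ = (x F)^⋆` for `x ≠ 0`, summed over `x ∈ E`.
lemma mul_star_le (E : Submodule A L) (hF : F ≠ ⊥) : E * s.star F ≤ s.star (E * F) := by
  refine mul_le.mpr fun x hx y hy => ?_
  rcases eq_or_ne x 0 with rfl | hx0
  · simp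
  have hxF : F.map (LinearMap.mul A L x) ≠ ⊥ := by
    obtain ⟨f, hf, hf0⟩ := (Submodule.ne_bot_iff F).mp hF
    exact (Submodule.ne_bot_iff _).mpr ⟨x * f, ⟨f, hf, rfl⟩, mul_ne_zero hx0 hf0⟩
  have hxFE : F.map (LinearMap.mul A L x) ≤ E * F := by
    rintro _ ⟨f, hf, rfl⟩
    exact mul_mem_mul hx hf
  have hxy : x * y ∈ s.star (F.map (LinearMap.mul A L x)) := by
    rw [s.star_smul x hx0 F hF]
    exact ⟨y, hy, rfl⟩
  exact s.star_mono _ _ hxF (mul_ne_bot_s17 ((Submodule.ne_bot_iff E).mpr ⟨x, hx, hx0⟩) hF) hxFE hxy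

lemma star_mul_star_le_s17 (hE : E ≠ ⊥) (hF : F ≠ ⊥) :
    s.star E * s.star F ≤ s.star (E * F) := by
  have hEF : s.star E * F ≤ s.star (E * F) := by
    simpa only [mul_comm _ F] using s.mul_star_le F hE
  calc s.star E * s.star F ≤ s.star (s.star E * F) := s.mul_star_le _ hF
    _ ≤ s.star (s.star (E * F)) :=
      s.star_mono _ _ (mul_ne_bot_s17 (s.star_ne_bot hE) hF) (s.star_ne_bot (mul_ne_bot_s17 hE hF)) hEF
    _ = s.star (E * F) := s.star_idem _ (mul_ne_bot_s17 hE hF)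

lemma one_mem_star_mul (hE : E ≠ ⊥) (hF : F ≠ ⊥) (h₁ : (1 : L) ∈ s.star E)
    (h₂ : (1 : L) ∈ s.star F) : (1 : L) ∈ s.star (E * F) :=
  s.star_mul_star_le_s17 hE hF (by simpa using mul_mem_mul h₁ h₂)

end SemistarOperation

section FiniteType

variable (s : SemistarOperation A L) {E F G : Submodule A L}

lemma star_le_starF (hFE : F ≤ E) (hF : F ≠ ⊥) (hfg : F.FG) : s.star F ≤ starF s E :=
  le_iSup₂_of_le F ⟨hFE, hF, hfg⟩ le_rfl

lemma starF_mono (h : E ≤ F) : starF s E ≤ starF s F :=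
  iSup₂_le fun _ hG => star_le_starF s (hG.1.trans h) hG.2.1 hG.2.2

lemma starF_le_star (hE : E ≠ ⊥) : starF s E ≤ s.star E :=
  iSup₂_le fun _ hF => s.star_mono _ _ hF.2.1 hE hF.1

lemma le_starF (E : Submodule A L) : E ≤ starF s E := by
  intro x hx
  rcases eq_or_ne x 0 with rfl | hx0
  · exact zero_mem _
  have hxE : span A {x} ≤ E := span_singleton_le_iff_mem x E |>.mpr hx
  have hx : span A {x} ≠ ⊥ := by simpa using hx0
  exact star_le_starF s hxE hx (fg_span_singleton x) (s.le_star _ hx (mem_span_singleton_self x))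

lemma starF_bot : starF s ⊥ = ⊥ :=
  le_bot_iff.mp <| iSup₂_le fun _ hF => absurd (le_bot_iff.mp hF.1) hF.2.1

lemma starF_one : starF s 1 = s.star 1 :=
  le_antisymm (starF_le_star s one_ne_bot_s17)
    (star_le_starF s le_rfl one_ne_bot_s17 fg_one_s17)

lemma starF_iSup_of_directed {ι : Type*} [Nonempty ι] {f : ι → Submodule A L}
    (hf : Directed (· ≤ ·) f) : starF s (⨆ i, f i) = ⨆ i, starF s (f i) := by
  refine le_antisymm (iSup₂_le fun F hF => ?_) (iSup_le fun i => starF_mono s (le_iSup f i))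
  obtain ⟨i, hi⟩ := hF.2.2.exists_le_of_le_iSup hf hF.1
  exact (star_le_starF s hi hF.2.1 hF.2.2).trans (le_iSup (fun i => starF s (f i)) i)

lemma starF_eq_iSup (E : Submodule A L) :
    starF s E = ⨆ F : {F : Submodule A L // F ≤ E ∧ F ≠ ⊥ ∧ F.FG}, s.star F :=
  iSup_subtype'

lemma directed_star_fg (E : Submodule A L) :
    Directed (· ≤ ·) fun F : {F : Submodule A L // F ≤ E ∧ F ≠ ⊥ ∧ F.FG} => s.star F := by
  rintro ⟨F₁, hF₁E, hF₁, hF₁fg⟩ ⟨F₂, hF₂E, hF₂, hF₂fg⟩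
  have hF : F₁ ⊔ F₂ ≠ ⊥ := fun h => hF₁ (eq_bot_mono le_sup_left h)
  exact ⟨⟨F₁ ⊔ F₂, sup_le hF₁E hF₂E, hF, hF₁fg.sup hF₂fg⟩,
    s.star_mono _ _ hF₁ hF le_sup_left, s.star_mono _ _ hF₂ hF le_sup_right⟩

lemma exists_fg_le_star_of_le_starF (hG : G ≠ ⊥) (hGfg : G.FG) (h : G ≤ starF s E) :
    ∃ F ≤ E, F ≠ ⊥ ∧ F.FG ∧ G ≤ s.star F := by
  have hE : E ≠ ⊥ := by
    rintro rfl
    exact hG (eq_bot_mono h (starF_bot s))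
  obtain ⟨x, hx, hx0⟩ := (Submodule.ne_bot_iff E).mp hE
  have : Nonempty {F : Submodule A L // F ≤ E ∧ F ≠ ⊥ ∧ F.FG} :=
    ⟨⟨span A {x}, span_singleton_le_iff_mem x E |>.mpr hx, by simpa using hx0,
      fg_span_singleton x⟩⟩
  rw [starF_eq_iSup] at h
  obtain ⟨⟨F, hFE, hF, hFfg⟩, hGF⟩ := hGfg.exists_le_of_le_iSup (directed_star_fg s E) h
  exact ⟨F, hFE, hF, hFfg, hGF⟩

lemma exists_fg_one_mem_star_of_one_mem_starF (h : (1 : L) ∈ starF s E) :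
    ∃ F ≤ E, F ≠ ⊥ ∧ F.FG ∧ (1 : L) ∈ s.star F := by
  obtain ⟨F, hFE, hF, hFfg, h1⟩ := exists_fg_le_star_of_le_starF s
    (G := 1) one_ne_bot_s17 fg_one_s17 (one_le.mpr h)
  exact ⟨F, hFE, hF, hFfg, one_le.mp h1⟩

lemma starF_starF (E : Submodule A L) : starF s (starF s E) = starF s E := by
  refine le_antisymm (iSup₂_le fun G ⟨hGE, hG, hGfg⟩ => ?_) (le_starF s _)
  obtain ⟨F, hFE, hF, hFfg, hGF⟩ := exists_fg_le_star_of_le_starF s hG hGfg hGE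
  calc s.star G ≤ s.star (s.star F) := s.star_mono _ _ hG (s.star_ne_bot hF) hGF
    _ = s.star F := s.star_idem F hF
    _ ≤ starF s E := star_le_starF s hFE hF hFfg

lemma one_mem_starF_mul (h₁ : (1 : L) ∈ starF s E) (h₂ : (1 : L) ∈ starF s F) :
    (1 : L) ∈ starF s (E * F) := by
  obtain ⟨E', hE'E, hE', hE'fg, h₁'⟩ := exists_fg_one_mem_star_of_one_mem_starF s h₁
  obtain ⟨F', hF'F, hF', hF'fg, h₂'⟩ := exists_fg_one_mem_star_of_one_mem_starF s h₂
  exact star_le_starF s (mul_le_mul' hE'E hF'F) (mul_ne_bot_s17 hE' hF') (hE'fg.mul hF'fg)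
    (s.one_mem_star_mul hE' hF' h₁' h₂')

end FiniteType

section QuasiMaximal

variable (s : SemistarOperation A L) {P M : Ideal A}

lemma QuasiStarIdeal.one_notMem {f : Submodule A L → Submodule A L} (hP : QuasiStarIdeal f P)
    (hP' : P ≠ ⊤) : (1 : L) ∉ f (map (Algebra.linearMap A L) P) := by
  intro h1
  refine hP' ((Ideal.eq_top_iff_one P).mpr ?_)
  rw [← hP.2, mem_comap, Algebra.linearMap_apply, map_one]
  exact h1

lemma QuasiStarMax.not_le_of_one_mem (hM : QuasiStarMax (starF s) M)
    (h : (1 : L) ∈ starF s (map (Algebra.linearMap A L) P)) : ¬ P ≤ M :=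
  fun hPM => hM.1.one_notMem hM.2.1 (starF_mono s (map_mono hPM) h)

lemma exists_quasiStarMax_le (hP : P ≠ ⊥)
    (h : (1 : L) ∉ starF s (map (Algebra.linearMap A L) P)) :
    ∃ M, QuasiStarMax (starF s) M ∧ P ≤ M := by
  set S := {Q : Ideal A | P ≤ Q ∧ (1 : L) ∉ starF s (map (Algebra.linearMap A L) Q)}
  have hchain : ∀ c ⊆ S, IsChain (· ≤ ·) c → ∀ Q ∈ c, ∃ ub ∈ S, ∀ N ∈ c, N ≤ ub := by
    intro c hcS hc Q hQ
    have : Nonempty c := ⟨⟨Q, hQ⟩⟩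
    have hdir : Directed (· ≤ ·) fun N : c => map (Algebra.linearMap A L) (N : Ideal A) :=
      hc.directedOn.directed_val.mono_comp (· ≤ ·) fun _ _ => map_mono
    refine ⟨sSup c, ⟨(hcS hQ).1.trans (le_sSup hQ), fun h1 => ?_⟩, fun _ => le_sSup⟩
    have hdir' : Directed (· ≤ ·)
        fun N : c => starF s (map (Algebra.linearMap A L) (N : Ideal A)) :=
      fun i j => let ⟨k, hik, hjk⟩ := hdir i j; ⟨k, starF_mono s hik, starF_mono s hjk⟩
    rw [sSup_eq_iSup', Submodule.map_iSup, starF_iSup_of_directed s hdir,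
      mem_iSup_of_directed _ hdir'] at h1
    obtain ⟨⟨N, hN⟩, h1N⟩ := h1
    exact (hcS hN).2 h1N
  obtain ⟨M, hPM, ⟨-, hM1⟩, hMmax⟩ := zorn_le_nonempty₀ S hchain P ⟨le_rfl, h⟩
  refine ⟨M, ⟨⟨ne_bot_of_le_ne_bot hP hPM, ?_⟩, ?_, ?_⟩, hPM⟩
  · -- the closure of `M` still avoids `1`, so by maximality it is `M` itself
    set M' := (starF s (map (Algebra.linearMap A L) M)).comap (Algebra.linearMap A L)
    have hMM' : M ≤ M' := fun x hx => le_starF s _ (mem_map_of_mem hx)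
    have hM'1 : (1 : L) ∉ starF s (map (Algebra.linearMap A L) M') := fun h1 =>
      hM1 (starF_starF s _ ▸ starF_mono s (map_comap_le _ _) h1)
    exact le_antisymm (hMmax ⟨hPM.trans hMM', hM'1⟩ hMM') hMM'
  · rintro rfl
    exact hM1 (le_starF s _ ⟨1, mem_top, (algebraMap A L).map_one⟩)
  · intro Q hQ hQ' hMQ
    exact le_antisymm hMQ (hMmax ⟨hPM.trans hMQ, hQ.one_notMem hQ'⟩ hMQ)

lemma one_mem_starF_map_iff (hP : P ≠ ⊥) :
    (1 : L) ∈ starF s (map (Algebra.linearMap A L) P) ↔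
      ∀ M, QuasiStarMax (starF s) M → ¬ P ≤ M := by
  refine ⟨fun h M hM => hM.not_le_of_one_mem s h, fun h => by_contra fun h1 => ?_⟩
  obtain ⟨M, hM, hPM⟩ := exists_quasiStarMax_le s hP h1
  exact h M hM hPM

lemma QuasiStarMax.isPrime (hM : QuasiStarMax (starF s) M) : M.IsPrime := by
  refine ⟨hM.2.1, fun {a b} hab => by_contra fun hnot => ?_⟩
  rw [not_or] at hnot
  -- `M + (x)` lies in no quasi-maximal ideal, since any such would contain `M`, hence equal it.
  have key : ∀ x ∉ M, (1 : L) ∈ starF s (map (Algebra.linearMap A L) (M ⊔ Ideal.span {x})) :=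
    fun x hx => (one_mem_starF_map_iff s (ne_bot_of_le_ne_bot hM.1.1 le_sup_left)).mpr
      fun N hN hMN => hx <| hM.2.2 N hN.1 hN.2.1 (le_sup_left.trans hMN) ▸
        hMN (mem_sup_right (Ideal.mem_span_singleton_self x))
  have hle : (M ⊔ Ideal.span {a}) * (M ⊔ Ideal.span {b}) ≤ M := by
    rw [Ideal.sup_mul, Ideal.mul_sup, Ideal.mul_sup, Ideal.span_singleton_mul_span_singleton]
    exact sup_le (sup_le Ideal.mul_le_left Ideal.mul_le_left)
      (sup_le Ideal.mul_le_right ((Ideal.span_singleton_le_iff_mem M).mpr hab))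
  refine hM.not_le_of_one_mem s ?_ hle
  rw [show Algebra.linearMap A L = (Algebra.ofId A L).toLinearMap from rfl, Submodule.map_mul]
  exact one_mem_starF_mul s (key a hnot.1) (key b hnot.2)

end QuasiMaximal

section Localization

variable {M : Ideal A} {E W : Submodule A L}

lemma locAt_mul_locAt_le (hM : M.IsPrime) : (locAt M : Submodule A L) * locAt M ≤ locAt M := by
  rw [locAt, span_mul_span, span_le]
  rintro _ ⟨x, ⟨t, ht, hx⟩, y, ⟨u, hu, hy⟩, rfl⟩
  refine subset_span ⟨t * u, hM.mul_notMem ht hu, ?_⟩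
  rw [map_mul, mul_mul_mul_comm, hx, hy, one_mul]

lemma mul_locAt_eq_locAt (hM : M.IsPrime) (hE : E ≤ locAt M) (h1 : (1 : L) ∈ E * locAt M) :
    E * locAt M = locAt M := by
  refine le_antisymm ((mul_le_mul_left hE _).trans (locAt_mul_locAt_le hM)) ?_
  calc (locAt M : Submodule A L) = 1 * locAt M := (one_mul _).symm
    _ ≤ E * locAt M * locAt M := mul_le_mul_left (one_le.mpr h1) _
    _ = E * (locAt M * locAt M) := mul_assoc _ _ _
    _ ≤ E * locAt M := mul_le_mul_right (locAt_mul_locAt_le hM) _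

lemma exists_notMem_mul_mem_add (hM : M.IsPrime) {N : Submodule A L} {x z : L}
    (hx : ∃ t ∉ M, x * algebraMap A L t ∈ N) (hz : ∃ t ∉ M, z * algebraMap A L t ∈ N) :
    ∃ t ∉ M, (x + z) * algebraMap A L t ∈ N := by
  obtain ⟨t, ht, hxt⟩ := hx
  obtain ⟨u, hu, hzu⟩ := hz
  refine ⟨t * u, hM.mul_notMem ht hu, ?_⟩
  have : (x + z) * algebraMap A L (t * u) =
      u • (x * algebraMap A L t) + t • (z * algebraMap A L u) := by
    simp only [Algebra.smul_def, map_mul]; ring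
  exact this ▸ add_mem (smul_mem _ u hxt) (smul_mem _ t hzu)

lemma exists_mul_mem_one_of_mem_locAt (hM : M.IsPrime) {y : L} (hy : y ∈ locAt M) :
    ∃ t ∉ M, y * algebraMap A L t ∈ (1 : Submodule A L) := by
  induction hy using span_induction with
  | mem x hx =>
    obtain ⟨t, ht, hxt⟩ := hx
    exact ⟨t, ht, hxt ▸ one_le.mp le_rfl⟩
  | zero => exact ⟨1, M.ne_top_iff_one.mp hM.ne_top, by simp⟩
  | add x z _ _ hx hz => exact exists_notMem_mul_mem_add hM hx hz
  | smul a x _ hx =>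
    obtain ⟨t, ht, hxt⟩ := hx
    exact ⟨t, ht, smul_mul_assoc a x (algebraMap A L t) ▸ smul_mem _ a hxt⟩

lemma exists_mul_mem_of_mem_mul_locAt (hM : M.IsPrime) {z : L} (hz : z ∈ E * locAt M) :
    ∃ t ∉ M, z * algebraMap A L t ∈ E := by
  refine Submodule.mul_induction_on hz (fun x hx y hy => ?_) (fun x z hx hz => ?_)
  · obtain ⟨t, ht, hyt⟩ := exists_mul_mem_one_of_mem_locAt hM hy
    obtain ⟨a, ha⟩ := mem_one.mp hyt
    refine ⟨t, ht, ?_⟩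
    rw [mul_assoc, ← ha, mul_comm, ← Algebra.smul_def]
    exact smul_mem _ a hx
  · exact exists_notMem_mul_mem_add hM hx hz

lemma exists_algebraMap_mem_one_div (hM : M.IsPrime) (hW : W.FG) (h : W ≤ locAt M) :
    ∃ t ∉ M, algebraMap A L t ∈ 1 / W := by
  induction W, hW using fg_induction with
  | singleton x =>
    obtain ⟨t, ht, hxt⟩ := exists_mul_mem_one_of_mem_locAt hM (h (mem_span_singleton_self x))
    refine ⟨t, ht, fun y hy => ?_⟩
    obtain ⟨a, rfl⟩ := mem_span_singleton.mp hy
    rw [mul_smul_comm, mul_comm]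
    exact smul_mem _ a hxt
  | sup W₁ W₂ _ _ ih₁ ih₂ =>
    obtain ⟨t, ht, htW⟩ := ih₁ (le_sup_left.trans h)
    obtain ⟨u, hu, huW⟩ := ih₂ (le_sup_right.trans h)
    refine ⟨t * u, hM.mul_notMem ht hu, fun y hy => ?_⟩
    obtain ⟨y₁, hy₁, y₂, hy₂, rfl⟩ := mem_sup.mp hy
    have : algebraMap A L (t * u) * (y₁ + y₂) =
        u • (algebraMap A L t * y₁) + t • (algebraMap A L u * y₂) := by
      simp only [Algebra.smul_def, map_mul]; ring
    exact this ▸ add_mem (smul_mem _ u (htW y₁ hy₁)) (smul_mem _ t (huW y₂ hy₂))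

variable [IsFractionRing A L]

lemma one_mem_mul_locAt_iff (hM : M.IsPrime) :
    (1 : L) ∈ E * locAt M ↔ ∃ t ∉ M, algebraMap A L t ∈ E := by
  refine ⟨fun h => by simpa using exists_mul_mem_of_mem_mul_locAt hM h, fun ⟨t, ht, htE⟩ => ?_⟩
  have ht0 : algebraMap A L t ≠ 0 := fun h0 =>
    ht (IsFractionRing.injective A L (h0.trans (map_zero _).symm) ▸ M.zero_mem)
  have ht' : (algebraMap A L t)⁻¹ ∈ (locAt M : Submodule A L) :=
    subset_span ⟨t, ht, inv_mul_cancel₀ ht0⟩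
  simpa [ht0] using mul_mem_mul htE ht'

lemma comap_ne_bot_of_ne_bot (hE : E ≠ ⊥) : E.comap (Algebra.linearMap A L) ≠ ⊥ := by
  obtain ⟨x, hx, hx0⟩ := (Submodule.ne_bot_iff E).mp hE
  obtain ⟨⟨a, b⟩, hab⟩ := IsLocalization.surj (nonZeroDivisors A) x
  refine (Submodule.ne_bot_iff _).mpr ⟨a, ?_, ?_⟩
  · change algebraMap A L a ∈ E
    rw [← hab, mul_comm, ← Algebra.smul_def]
    exact smul_mem _ _ hx
  · rintro rfl
    rw [map_zero] at hab
    exact (IsLocalization.map_units L b).ne_zero ((mul_eq_zero.mp hab).resolve_left hx0)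

end Localization

section Spectral

variable (s : SemistarOperation A L) {J W : Submodule A L} {M : Ideal A}

lemma not_comap_le_of_one_mem_star (hW : W.FG) (hW0 : W ≠ ⊥) (h1 : (1 : L) ∈ s.star W)
    (hloc : ∀ N, QuasiStarMax (starF s) N → W ≤ locAt N) (hM : QuasiStarMax (starF s) M) :
    ¬ W.comap (Algebra.linearMap A L) ≤ M := by
  -- the conductor `(A :_A W)`
  set C : Ideal A := (1 / W).comap (Algebra.linearMap A L)
  have hC : ∀ N, QuasiStarMax (starF s) N → ¬ C ≤ N := fun N hN hCN => by
    obtain ⟨t, htN, htC⟩ := exists_algebraMap_mem_one_div hN.isPrime hW (hloc N hN)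
    exact htN (hCN htC)
  have hC1 : (1 : L) ∈ starF s (map (Algebra.linearMap A L) C) :=
    (one_mem_starF_map_iff s fun hC0 => hC M hM (hC0.le.trans bot_le)).mpr hC
  have hC_le : map (Algebra.linearMap A L) C ≤ 1 := by
    rw [one_eq_range]
    exact LinearMap.map_le_range
  have hCW : map (Algebra.linearMap A L) C * W ≤
      map (Algebra.linearMap A L) (W.comap (Algebra.linearMap A L)) := by
    rw [map_comap_eq (Algebra.linearMap A L) W, ← one_eq_range]
    have hC_div : map (Algebra.linearMap A L) C ≤ 1 / W := map_comap_le _ _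
    refine le_inf ((mul_le_mul_left hC_div W).trans ?_) ?_
    · exact le_div_iff_mul_le.mp le_rfl
    · exact (mul_le_mul_left hC_le W).trans (one_mul W).le
  exact hM.not_le_of_one_mem s
    (starF_mono s hCW (one_mem_starF_mul s hC1 (star_le_starF s le_rfl hW0 hW h1)))

theorem one_mem_starF_iff_forall_one_mem_mul_locAt [IsFractionRing A L] (hJ : J ≠ ⊥)
    (hloc : ∀ M, QuasiStarMax (starF s) M → J ≤ locAt M) :
    (1 : L) ∈ starF s J ↔ ∀ M, QuasiStarMax (starF s) M → (1 : L) ∈ J * locAt M := by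
  refine ⟨fun h1 M hM => ?_, fun h => ?_⟩
  · obtain ⟨W, hWJ, hW0, hWfg, hW1⟩ := exists_fg_one_mem_star_of_one_mem_starF s h1
    obtain ⟨t, htW, htM⟩ := SetLike.not_le_iff_exists.mp
      (not_comap_le_of_one_mem_star s hWfg hW0 hW1 (fun N hN => hWJ.trans (hloc N hN)) hM)
    exact (one_mem_mul_locAt_iff hM.isPrime).mpr ⟨t, htM, hWJ htW⟩
  · refine starF_mono s (map_comap_le _ _)
      ((one_mem_starF_map_iff s (comap_ne_bot_of_ne_bot hJ)).mpr fun M hM hJM => ?_)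
    obtain ⟨t, htM, htJ⟩ := (one_mem_mul_locAt_iff hM.isPrime).mp (h M hM)
    exact htM (hJM htJ)

lemma starTilde_one : starTilde s 1 = ⨅ (M) (_ : QuasiStarMax (starF s) M), locAt M := by
  simp only [starTilde, one_mul]

lemma star_one_le_locAt (h : s.star 1 = starTilde s 1) (hM : QuasiStarMax (starF s) M) :
    s.star 1 ≤ locAt M := by
  rw [h, starTilde_one]
  exact iInf₂_le M hM

theorem starTilde_eq_star_one_iff (h : s.star 1 = starTilde s 1) (hJ : J ≤ s.star 1) :
    starTilde s J = s.star 1 ↔ ∀ M, QuasiStarMax (starF s) M → (1 : L) ∈ J * locAt M := by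
  refine ⟨fun hJ1 M hM => ?_, fun h1 => ?_⟩
  · have hle : starTilde s J ≤ J * locAt M := iInf₂_le M hM
    exact hle (hJ1 ▸ s.one_mem_star_one)
  · rw [h, starTilde_one]
    exact iInf_congr fun M => iInf_congr fun hM =>
      mul_locAt_eq_locAt hM.isPrime (hJ.trans (star_one_le_locAt s h hM)) (h1 M hM)

theorem starF_eq_star_one_iff (hJ : J ≤ s.star 1) : starF s J = s.star 1 ↔ (1 : L) ∈ starF s J := by
  refine ⟨fun h => h ▸ s.one_mem_star_one, fun h1 => le_antisymm ?_ ?_⟩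
  · calc starF s J ≤ starF s (s.star 1) := starF_mono s hJ
      _ ≤ s.star (s.star 1) := starF_le_star s (s.star_ne_bot one_ne_bot_s17)
      _ = s.star 1 := s.star_star_one
  · calc s.star 1 = starF s 1 := (starF_one s).symm
      _ ≤ starF s (starF s J) := starF_mono s (one_le.mpr h1)
      _ = starF s J := starF_starF s J

end Spectral

theorem stmt17 (s : SemistarOperation D K) (h : s.star 1 = starTilde s 1)
    (I : Submodule D K) (hI : I ≠ ⊥) :
    starF s (I * (starF s 1 / I)) = starF s 1 ↔
    starTilde s (I * (starTilde s 1 / I)) = starTilde s 1 := by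
  have hJ : I * (s.star 1 / I) ≤ s.star 1 := by
    rw [mul_comm]
    exact le_div_iff_mul_le.mp le_rfl
  rw [starF_one, starF_eq_star_one_iff s hJ, ← h, starTilde_eq_star_one_iff s h hJ]
  rcases eq_or_ne (I * (s.star 1 / I)) ⊥ with hJ0 | hJ0
  · -- then `D^⋆ ≠ K`, so quasi-maximal ideals exist and both sides fail
    have hT : s.star 1 ≠ ⊤ := fun hT => by
      have h1 : (1 : K) ∈ s.star 1 / I := hT ▸ one_mem_div.mpr le_top
      rw [(mul_eq_bot.mp hJ0).resolve_left hI, mem_bot] at h1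
      exact one_ne_zero h1
    obtain ⟨M, hM⟩ : ∃ M, QuasiStarMax (starF s) M := by
      by_contra! hno
      exact hT (by simp [h, starTilde, hno])
    simpa [hJ0, starF_bot] using ⟨M, hM⟩
  · exact one_mem_starF_iff_forall_one_mem_mul_locAt s hJ0 fun M hM =>
      hJ.trans (star_one_le_locAt s h hM)
end
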